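/- Derivability of the empty-prefix sequent for an infinite λ-term M in the proof system Reg⁺ is equivalent to derivability in Reg₀⁺, where Reg₀⁺ is Reg⁺ with the additional side-condition on FIX instances that every sequent on a thread from an open discharged assumption down to the FIX instance has abstraction prefix length at least that of the assumption. -/

import Mathlib

/-- Node labels of (nameless, de Bruijn) infinite λ-terms. -/
inductive Lab : Type
  | lam : Lab
  | app : Lab
  | var : ℕ → Lab
deriving DecidableEq

/-- Which child positions a node with a given label may have. -/
def okChild : Lab → Bool → Prop
  | .lam, false => True
  | .app, _ => True
  | _, _ => False

/-- Infinite λ-terms (in nameless de Bruijn style), represented as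
labelled possibly-infinite binary trees given by their labelling function. -/
structure Tm : Type where
  lab : List Bool → Option Lab
  root : (lab []).isSome
  cons : ∀ p b, (lab (p ++ [b])).isSome ↔ ∃ l, lab p = some l ∧ okChild l b

namespace Tm

/-- Subterm at a position. -/
def sub (t : Tm) (p : List Bool) (h : (t.lab p).isSome) : Tm where
  lab q := t.lab (p ++ q)
  root := by simpa using h
  cons q b := by
    have h' := t.cons (p ++ q) b
    simpa [List.append_assoc] using h'

/-- Auxiliary: number of λ-labels strictly above, accumulating the prefix. -/
def ldepthAux (t : Tm) : List Bool → List Bool → ℕ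
  | _, [] => 0
  | pre, b :: p => (if t.lab pre = some .lam then 1 else 0) + t.ldepthAux (pre ++ [b]) p

/-- The number of λ-nodes strictly above position `p` in `t`. -/
def ldepth (t : Tm) (p : List Bool) : ℕ := t.ldepthAux [] p

end Tm

def shiftLab (σ : ℕ → ℕ) : Lab → Lab
  | .var k => .var (σ k)
  | l => l

theorem okChild_shiftLab (σ : ℕ → ℕ) (l : Lab) (b : Bool) :
    okChild (shiftLab σ l) b ↔ okChild l b := by
  cases l <;> cases b <;> simp [shiftLab, okChild]

/-- Relabel all variable nodes, depending on their λ-depth. -/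
def Tm.mapVar (t : Tm) (σ : ℕ → ℕ → ℕ) : Tm where
  lab p := (t.lab p).map (shiftLab (σ (t.ldepth p)))
  root := by
    have h := t.root
    cases hl : t.lab [] with
    | none => rw [hl] at h; simp at h
    | some l => simp [hl]
  cons p b := by
    constructor
    · intro hs
      have hs' : (t.lab (p ++ [b])).isSome := by simpa using hs
      obtain ⟨l', hl', hok⟩ := (t.cons p b).1 hs'
      exact ⟨shiftLab (σ (t.ldepth p)) l', by simp [hl'],
        (okChild_shiftLab _ _ _).2 hok⟩
    · rintro ⟨l', hl', hok⟩
      obtain ⟨l, hl, hfl⟩ := Option.map_eq_some_iff.mp (by simpa using hl')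
      have hok' : okChild l b := by
        have := hfl ▸ hok
        exact (okChild_shiftLab (σ (t.ldepth p)) l b).1 this
      have hs : (t.lab (p ++ [b])).isSome := (t.cons p b).2 ⟨l, hl, hok'⟩
      simpa using hs

/-- The term consisting of a single variable node with index 0. -/
def var0Tm : Tm where
  lab p := if p = [] then some (.var 0) else none
  root := by simp
  cons p b := by
    constructor
    · intro h
      simp only [List.append_eq_nil_iff] at h
      simp at h
    · rintro ⟨l, hl, hok⟩
      by_cases hp : p = []
      · subst hp
        simp only [if_pos rfl, Option.some.injEq] at hl
        cases hl
        cases b <;> simp [okChild] at hok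
      · simp [hp] at hl

/-- The last-but-`j` abstraction-prefix variable occurs in `t`
(at λ-depth `d` inside the term it has de Bruijn index `j + d`). -/
def OccursJ (j : ℕ) (t : Tm) : Prop := ∃ p, t.lab p = some (.var (j + t.ldepth p))

/-- Remove the prefix variable with base index `j` from the de Bruijn indexing. -/
def downJ (j : ℕ) (t : Tm) : Tm := t.mapVar (fun d k => if j + d < k then k - 1 else k)

/-- The last abstraction-prefix variable occurs. -/
def occurs0 : Tm → Prop := OccursJ 0

/-- Remove the (vacuous) last abstraction-prefix variable. -/
def down0 : Tm → Tm := downJ 0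

/-- `t` has no free variables pointing outside the term itself. -/
def ClosedTm (t : Tm) : Prop := ∀ p k, t.lab p = some (.var k) → k < t.ldepth p

/-- Sequents: a prefix length together with an infinite λ-term. -/
abbrev TSeq : Type := ℕ × Tm

/-- λ-decomposition step of the ARS `Reg⁺`. -/
def SLam (s s' : TSeq) : Prop :=
  s.2.lab [] = some .lam ∧ s'.1 = s.1 + 1 ∧
    ∃ h : (s.2.lab [false]).isSome, s'.2 = s.2.sub [false] h

/-- Left application-decomposition step. -/
def SApp0 (s s' : TSeq) : Prop :=
  s.2.lab [] = some .app ∧ s'.1 = s.1 ∧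
    ∃ h : (s.2.lab [false]).isSome, s'.2 = s.2.sub [false] h

/-- Right application-decomposition step. -/
def SApp1 (s s' : TSeq) : Prop :=
  s.2.lab [] = some .app ∧ s'.1 = s.1 ∧
    ∃ h : (s.2.lab [true]).isSome, s'.2 = s.2.sub [true] h

/-- Vacuous-prefix removal step (removal of the last prefix variable). -/
def SDel (s s' : TSeq) : Prop :=
  s.1 = s'.1 + 1 ∧ ¬ occurs0 s.2 ∧ s'.2 = down0 s.2

/-- The scope⁺-decomposition ARS `Reg⁺` on prefixed infinite λ-terms. -/
def Step (s s' : TSeq) : Prop := SLam s s' ∨ SApp0 s s' ∨ SApp1 s s' ∨ SDel s s'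

/-- A (scope⁺-delimiting) strategy for the ARS `Reg⁺`: a sub-ARS with the
same objects and the same normal forms. -/
def Strategy (S : TSeq → TSeq → Prop) : Prop :=
  (∀ a b, S a b → Step a b) ∧ (∀ a, (∃ b, Step a b) → ∃ b, S a b)

/-- An infinite λ-term is strongly regular if some scope⁺-delimiting strategy
reaches only finitely many sequents from it. -/
def StronglyRegular (M : Tm) : Prop :=
  ∃ S : TSeq → TSeq → Prop, Strategy S ∧ {s | Relation.ReflTransGen S (0, M) s}.Finite

/-- Natural-deduction derivations of the proof systems `Reg` (`plus = false`)
and `Reg⁺` (`plus = true`) on prefixed infinite λ-terms, with a context of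
open marked assumptions.  Side-conditions on FIX are recorded separately. -/
inductive Deriv (plus : Bool) : List TSeq → TSeq → Type
  | assum (Γ : List TSeq) (i : Fin Γ.length) : Deriv plus Γ (Γ.get i)
  | ax (Γ : List TSeq) (n : ℕ) (h1 : 1 ≤ n) (h2 : plus = false → n = 1) :
      Deriv plus Γ (n, var0Tm)
  | lam (Γ : List TSeq) (n : ℕ) (t : Tm) (h : t.lab [] = some .lam)
      (hs : (t.lab [false]).isSome) (D : Deriv plus Γ (n + 1, t.sub [false] hs)) :
      Deriv plus Γ (n, t)
  | app (Γ : List TSeq) (n : ℕ) (t : Tm) (h : t.lab [] = some .app)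
      (h0 : (t.lab [false]).isSome) (h1 : (t.lab [true]).isSome)
      (D0 : Deriv plus Γ (n, t.sub [false] h0)) (D1 : Deriv plus Γ (n, t.sub [true] h1)) :
      Deriv plus Γ (n, t)
  | del (Γ : List TSeq) (n : ℕ) (t : Tm) (j : ℕ) (hj : j ≤ n) (hp : plus = true → j = 0)
      (hocc : ¬ OccursJ j t) (D : Deriv plus Γ (n, downJ j t)) : Deriv plus Γ (n + 1, t)
  | fix (Γ : List TSeq) (s : TSeq) (D : Deriv plus (s :: Γ) s) : Deriv plus Γ s

namespace Deriv

/-- Depth (number of rule instances on a longest thread). -/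
def depth : ∀ {plus Γ s}, Deriv plus Γ s → ℕ
  | _, _, _, .assum _ _ => 0
  | _, _, _, .ax _ _ _ _ => 0
  | _, _, _, .lam _ _ _ _ _ D => D.depth + 1
  | _, _, _, .app _ _ _ _ _ _ D0 D1 => max D0.depth D1.depth + 1
  | _, _, _, .del _ _ _ _ _ _ _ D => D.depth + 1
  | _, _, _, .fix _ _ D => D.depth + 1

/-- The side-condition of `Reg`/`Reg⁺`: every FIX instance has an immediate
subderivation of depth at least 1. -/
def SC : ∀ {plus Γ s}, Deriv plus Γ s → Prop
  | _, _, _, .assum _ _ => True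
  | _, _, _, .ax _ _ _ _ => True
  | _, _, _, .lam _ _ _ _ _ D => D.SC
  | _, _, _, .app _ _ _ _ _ _ D0 D1 => D0.SC ∧ D1.SC
  | _, _, _, .del _ _ _ _ _ _ _ D => D.SC
  | _, _, _, .fix _ _ D => D.SC ∧ 1 ≤ D.depth

/-- `D.uses j` : some marked-assumption leaf of `D` refers to context entry `j`. -/
def uses : ∀ {plus Γ s}, Deriv plus Γ s → ℕ → Prop
  | _, _, _, .assum _ i, j => (i : ℕ) = j
  | _, _, _, .ax _ _ _ _, _ => False
  | _, _, _, .lam _ _ _ _ _ D, j => D.uses j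
  | _, _, _, .app _ _ _ _ _ _ D0 D1, j => D0.uses j ∨ D1.uses j
  | _, _, _, .del _ _ _ _ _ _ _ D, j => D.uses j
  | _, _, _, .fix _ _ D, j => D.uses (j + 1)

/-- `D.Holds m j` : every node of `D` whose subtree uses context entry `j`
(i.e. every node on a thread from such a marked assumption downwards)
has abstraction-prefix length at least `m`. -/
def Holds : ∀ {plus Γ s}, Deriv plus Γ s → ℕ → ℕ → Prop
  | _, _, _, .assum Γ i, m, j => ((i : ℕ) = j → m ≤ (Γ.get i).1)
  | _, _, _, .ax _ _ _ _, _, _ => True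
  | _, _, _, .lam _ n _ _ _ D, m, j => (D.uses j → m ≤ n) ∧ D.Holds m j
  | _, _, _, .app _ n _ _ _ _ D0 D1, m, j =>
      ((D0.uses j ∨ D1.uses j) → m ≤ n) ∧ D0.Holds m j ∧ D1.Holds m j
  | _, _, _, .del _ n _ _ _ _ _ D, m, j => (D.uses j → m ≤ n + 1) ∧ D.Holds m j
  | _, _, _, .fix _ s D, m, j => (D.uses (j + 1) → m ≤ s.1) ∧ D.Holds m (j + 1)

/-- The side-condition of `Reg₀⁺`: additionally, at every FIX instance all
sequents on threads from its open marked assumptions downwards have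
abstraction prefix at least as long as the one of the assumption. -/
def SC0 : ∀ {plus Γ s}, Deriv plus Γ s → Prop
  | _, _, _, .assum _ _ => True
  | _, _, _, .ax _ _ _ _ => True
  | _, _, _, .lam _ _ _ _ _ D => D.SC0
  | _, _, _, .app _ _ _ _ _ _ D0 D1 => D0.SC0 ∧ D1.SC0
  | _, _, _, .del _ _ _ _ _ _ _ D => D.SC0
  | _, _, _, .fix _ s D => D.SC0 ∧ 1 ≤ D.depth ∧ D.Holds s.1 0

/-- The set of sequents occurring in a derivation. -/
def seqs : ∀ {plus Γ s}, Deriv plus Γ s → Set TSeq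
  | _, _, _, .assum Γ i => {Γ.get i}
  | _, _, _, .ax _ n _ _ => {(n, var0Tm)}
  | _, _, _, .lam _ n t _ _ D => insert (n, t) D.seqs
  | _, _, _, .app _ n t _ _ _ D0 D1 => insert (n, t) (D0.seqs ∪ D1.seqs)
  | _, _, _, .del _ n t _ _ _ _ D => insert (n + 1, t) D.seqs
  | _, _, _, .fix _ s D => insert s D.seqs

end Deriv

/-! A closed `Reg⁺` derivation contains only finitely many sequents, and each of them is the
conclusion of a rule instance with premises among them; for the sequent of a discharged
assumption this is witnessed below the FIX instance discharging it, whose subderivation has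
positive depth. From such a finite rule-closed set `G` a `Reg₀⁺` derivation is grown upwards: a
sequent is closed as a marked assumption when it equals an ancestor on its branch all of whose
descendants on the branch have prefixes at least as long, and otherwise gets a FIX instance
followed by a rule instance with premises in `G`. Growth stops because, with `N` the largest
prefix length in `G`, the sum of `(|G| + 1) ^ (N - n)` over the ancestors still available for
closing (`n` their prefix lengths) strictly increases along a branch, yet never exceeds the
same sum over all of `G`. -/

namespace Deriv

theorem sc_of_sc0 {p : Bool} {Γ : List TSeq} {s : TSeq} (D : Deriv p Γ s) (h : D.SC0) :
    D.SC := by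
  induction D <;> simp only [SC, SC0] at h ⊢
  case lam ih | del ih => exact ih h
  case app ih0 ih1 => exact ⟨ih0 h.1, ih1 h.2⟩
  case fix ih => exact ⟨ih h.1, h.2.1⟩

theorem mem_seqs_self {p : Bool} {Γ : List TSeq} {s : TSeq} (D : Deriv p Γ s) : s ∈ D.seqs := by
  cases D <;> simp [seqs]

theorem finite_seqs {p : Bool} {Γ : List TSeq} {s : TSeq} (D : Deriv p Γ s) : D.seqs.Finite := by
  induction D <;> simp only [seqs]
  case assum | ax => exact Set.finite_singleton _
  case lam ih | del ih | fix ih => exact ih.insert _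
  case app ih0 ih1 => exact (ih0.union ih1).insert _

end Deriv

inductive Decomposable (G : Set TSeq) : TSeq → Prop
  | ax (n : ℕ) (hn : 1 ≤ n) : Decomposable G (n, var0Tm)
  | lam (n : ℕ) (t : Tm) (h : t.lab [] = some .lam) (hs : (t.lab [false]).isSome)
      (hmem : (n + 1, t.sub [false] hs) ∈ G) : Decomposable G (n, t)
  | app (n : ℕ) (t : Tm) (h : t.lab [] = some .app) (h0 : (t.lab [false]).isSome)
      (h1 : (t.lab [true]).isSome) (hmem0 : (n, t.sub [false] h0) ∈ G)
      (hmem1 : (n, t.sub [true] h1) ∈ G) : Decomposable G (n, t)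
  | del (n : ℕ) (t : Tm) (hocc : ¬ OccursJ 0 t) (hmem : (n, downJ 0 t) ∈ G) :
      Decomposable G (n + 1, t)

theorem Decomposable.mono {G G' : Set TSeq} (hG : G ⊆ G') {s : TSeq} :
    Decomposable G s → Decomposable G' s
  | ax n hn => ax n hn
  | lam n t h hs hmem => lam n t h hs (hG hmem)
  | app n t h h0 h1 hmem0 hmem1 => app n t h h0 h1 (hG hmem0) (hG hmem1)
  | del n t hocc hmem => del n t hocc (hG hmem)

namespace Deriv

theorem decomposable_of_sc {Γ : List TSeq} {s : TSeq} (D : Deriv true Γ s) (hsc : D.SC)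
    (hd : 1 ≤ D.depth) : Decomposable D.seqs s := by
  induction D <;> simp only [SC, depth, seqs] at hsc hd ⊢
  case assum => omega
  case ax n hn _ => exact .ax n hn
  case lam n t h hs D _ => exact .lam n t h hs (Set.mem_insert_of_mem _ D.mem_seqs_self)
  case app n t h h0 h1 D0 D1 _ _ =>
    exact .app n t h h0 h1 (Set.mem_insert_of_mem _ (.inl D0.mem_seqs_self))
      (Set.mem_insert_of_mem _ (.inr D1.mem_seqs_self))
  case del n t j _ hj hocc D _ =>
    obtain rfl : j = 0 := hj rfl
    exact .del n t hocc (Set.mem_insert_of_mem _ D.mem_seqs_self)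
  case fix ih => exact (ih hsc.1 hsc.2).mono (Set.subset_insert _ _)

theorem decomposable_of_mem_seqs {Γ : List TSeq} {s : TSeq} (D : Deriv true Γ s) {T : Set TSeq}
    (hsc : D.SC) (hT : D.seqs ⊆ T) (hΓ : ∀ g ∈ Γ, Decomposable T g) :
    ∀ x ∈ D.seqs, Decomposable T x := by
  induction D <;>
    simp only [SC, seqs, Set.insert_subset_iff, Set.union_subset_iff, Set.forall_mem_insert,
      Set.mem_singleton_iff, forall_eq] at hsc hT ⊢
  case assum Γ i => exact hΓ _ (List.get_mem Γ i)
  case ax n hn _ => exact .ax n hn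
  case lam n t h hs D ih => exact ⟨.lam n t h hs (hT.2 D.mem_seqs_self), ih hsc hT.2 hΓ⟩
  case app n t h h0 h1 D0 D1 ih0 ih1 =>
    exact ⟨.app n t h h0 h1 (hT.2.1 D0.mem_seqs_self) (hT.2.2 D1.mem_seqs_self),
      fun x hx => hx.elim (ih0 hsc.1 hT.2.1 hΓ x) (ih1 hsc.2 hT.2.2 hΓ x)⟩
  case del n t j _ hj hocc D ih =>
    obtain rfl : j = 0 := hj rfl
    exact ⟨.del n t hocc (hT.2 D.mem_seqs_self), ih hsc hT.2 hΓ⟩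
  case fix s D ih =>
    have hs : Decomposable T s := (D.decomposable_of_sc hsc.1 hsc.2).mono hT.2
    exact ⟨hs, ih hsc.1 hT.2 (List.forall_mem_cons.2 ⟨hs, hΓ⟩)⟩

end Deriv

/-- Context entry `j` (entry `0` being the most recently pushed one) may close an assumption
of a `Reg₀⁺` derivation: the more recent entries, which lie on the thread in between, have
prefixes at least as long. -/
def ValidAt (Γ : List TSeq) (j : ℕ) : Prop :=
  ∀ hj : j < Γ.length, ∀ g ∈ Γ.take j, Γ[j].1 ≤ g.1

theorem ValidAt.le_head {s : TSeq} {Γ : List TSeq} {j : ℕ} (h : ValidAt (s :: Γ) j)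
    (hj : j < (s :: Γ).length) : (s :: Γ)[j].1 ≤ s.1 := by
  cases j with
  | zero => rfl
  | succ j => exact h hj s (by simp)

theorem ValidAt.of_cons {s : TSeq} {Γ : List TSeq} {j : ℕ} (h : ValidAt (s :: Γ) (j + 1)) :
    ValidAt Γ j :=
  fun hj g hg => h (by simpa using hj) g (by simp [hg])

section ValidSet

noncomputable local instance : DecidableEq TSeq := Classical.decEq _

noncomputable def validSet : List TSeq → Finset TSeq
  | [] => ∅
  | s :: Γ => insert s ((validSet Γ).filter (·.1 ≤ s.1))

theorem exists_validAt_of_mem_validSet {Γ : List TSeq} {s : TSeq} (hs : s ∈ validSet Γ) :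
    ∃ j, ∃ hj : j < Γ.length, Γ[j] = s ∧ ValidAt Γ j := by
  induction Γ with
  | nil => simp [validSet] at hs
  | cons g Γ ih =>
    rcases Finset.mem_insert.1 hs with rfl | hs
    · exact ⟨0, by simp, rfl, fun _ x hx => by simp at hx⟩
    · obtain ⟨hs, hle⟩ := Finset.mem_filter.1 hs
      obtain ⟨j, hj, rfl, hval⟩ := ih hs
      refine ⟨j + 1, by simpa using hj, rfl, fun _ x hx => ?_⟩
      rcases List.mem_cons.1 (by simpa using hx) with rfl | hx
      · exact hle
      · exact hval hj x hx

theorem validSet_subset (Γ : List TSeq) : ∀ g ∈ validSet Γ, g ∈ Γ := by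
  induction Γ with
  | nil => simp [validSet]
  | cons s Γ ih =>
    intro g hg
    rcases Finset.mem_insert.1 hg with rfl | hg
    · exact List.mem_cons_self
    · exact List.mem_cons_of_mem _ (ih g (Finset.mem_filter.1 hg).1)

/-- Weight of a sequent relative to a finite set `G`: the base `|G| + 1` makes the weight of a
sequent exceed that of any family of sequents of `G` with longer prefixes. -/
def weight (G : Finset TSeq) (g : TSeq) : ℕ := (G.card + 1) ^ (G.sup Prod.fst - g.1)

theorem sum_weight_lt_weight {G P : Finset TSeq} (hP : P ⊆ G) (s : TSeq)
    (hlt : ∀ g ∈ P, s.1 < g.1) : ∑ g ∈ P, weight G g < weight G s := by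
  rcases P.eq_empty_or_nonempty with rfl | ⟨g₀, hg₀⟩
  · exact Nat.pow_pos (Nat.succ_pos _)
  set K := G.card
  set N := G.sup Prod.fst
  have hsN : s.1 < N := (hlt g₀ hg₀).trans_le (Finset.le_sup (f := Prod.fst) (hP hg₀))
  have hbound : ∀ g ∈ P, weight G g ≤ (K + 1) ^ (N - s.1 - 1) := fun g hg =>
    Nat.pow_le_pow_right K.succ_pos
      (by have := Finset.le_sup (f := Prod.fst) (hP hg); have := hlt g hg; omega)
  calc ∑ g ∈ P, weight G g ≤ P.card * (K + 1) ^ (N - s.1 - 1) := by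
        simpa using Finset.sum_le_card_nsmul P _ _ hbound
    _ ≤ K * (K + 1) ^ (N - s.1 - 1) := Nat.mul_le_mul_right _ (Finset.card_le_card hP)
    _ < (K + 1) * (K + 1) ^ (N - s.1 - 1) :=
        Nat.mul_lt_mul_of_pos_right K.lt_succ_self (Nat.pow_pos K.succ_pos)
    _ = weight G s := by rw [weight, ← pow_succ']; congr 1; omega

theorem sum_weight_validSet_lt_cons {G : Finset TSeq} {Γ : List TSeq} (hΓ : ∀ g ∈ Γ, g ∈ G)
    {s : TSeq} (hs : s ∉ validSet Γ) :
    ∑ g ∈ validSet Γ, weight G g < ∑ g ∈ validSet (s :: Γ), weight G g := by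
  have hpop := sum_weight_lt_weight (P := (validSet Γ).filter (¬ ·.1 ≤ s.1))
    (fun g hg => hΓ g (validSet_subset Γ g (Finset.mem_filter.1 hg).1)) s
    (fun g hg => not_le.1 (Finset.mem_filter.1 hg).2)
  rw [validSet, Finset.sum_insert (fun h => hs (Finset.mem_filter.1 h).1),
    ← Finset.sum_filter_add_sum_filter_not (validSet Γ) (·.1 ≤ s.1)]
  omega

end ValidSet

namespace Deriv

/-- The invariant of the upward construction: a FIX instance over a guarded derivation whose
conclusion is the head of its context is guarded again, and over the empty context it is `SC0`. -/
structure Guarded {p : Bool} {Γ : List TSeq} {s : TSeq} (D : Deriv p Γ s) : Prop where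
  sc0 : D.SC0
  holds : ∀ j (hj : j < Γ.length), D.Holds Γ[j].1 j
  validAt : ∀ j, D.uses j → ValidAt Γ j

variable {p : Bool} {Γ : List TSeq}

theorem guarded_assum {j : ℕ} (hj : j < Γ.length) (hval : ValidAt Γ j) :
    (assum (plus := p) Γ ⟨j, hj⟩).Guarded := by
  constructor <;> simp only [SC0, Holds, uses]
  · rintro i _ rfl
    rfl
  · rintro i rfl
    exact hval

theorem guarded_ax {n : ℕ} (h1 : 1 ≤ n) (h2 : p = false → n = 1) : (ax Γ n h1 h2).Guarded := by
  constructor <;> simp only [SC0, Holds, uses] <;> simp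

theorem guarded_lam {n : ℕ} {t : Tm} (h : t.lab [] = some .lam) (hs : (t.lab [false]).isSome)
    {D : Deriv p ((n, t) :: Γ) (n + 1, t.sub [false] hs)} (hD : D.Guarded) :
    (lam _ n t h hs D).Guarded := by
  constructor <;> simp only [SC0, Holds, uses]
  · exact hD.sc0
  · exact fun j hj => ⟨fun hu => (hD.validAt j hu).le_head hj, hD.holds j hj⟩
  · exact hD.validAt

theorem guarded_app {n : ℕ} {t : Tm} (h : t.lab [] = some .app) (h0 : (t.lab [false]).isSome)
    (h1 : (t.lab [true]).isSome) {D0 : Deriv p ((n, t) :: Γ) (n, t.sub [false] h0)}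
    {D1 : Deriv p ((n, t) :: Γ) (n, t.sub [true] h1)} (hD0 : D0.Guarded) (hD1 : D1.Guarded) :
    (app _ n t h h0 h1 D0 D1).Guarded := by
  have hval : ∀ j, D0.uses j ∨ D1.uses j → ValidAt ((n, t) :: Γ) j :=
    fun j hu => hu.elim (hD0.validAt j) (hD1.validAt j)
  constructor <;> simp only [SC0, Holds, uses]
  · exact ⟨hD0.sc0, hD1.sc0⟩
  · exact fun j hj => ⟨fun hu => (hval j hu).le_head hj, hD0.holds j hj, hD1.holds j hj⟩
  · exact hval

theorem guarded_del {n : ℕ} {t : Tm} (hocc : ¬ OccursJ 0 t)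
    {D : Deriv true ((n + 1, t) :: Γ) (n, downJ 0 t)} (hD : D.Guarded) :
    (del _ n t 0 n.zero_le (fun _ => rfl) hocc D).Guarded := by
  constructor <;> simp only [SC0, Holds, uses]
  · exact hD.sc0
  · exact fun j hj => ⟨fun hu => (hD.validAt j hu).le_head hj, hD.holds j hj⟩
  · exact hD.validAt

theorem guarded_fix {s : TSeq} {E : Deriv p (s :: Γ) s} (hE : E.Guarded) (hd : 1 ≤ E.depth) :
    (fix Γ s E).Guarded := by
  constructor <;> simp only [SC0, Holds, uses]
  · exact ⟨hE.sc0, hd, hE.holds 0 (by simp)⟩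
  · exact fun j hj =>
      ⟨fun hu => (hE.validAt (j + 1) hu).le_head (by simpa), hE.holds (j + 1) (by simpa)⟩
  · exact fun j hu => (hE.validAt (j + 1) hu).of_cons

theorem exists_guarded_of_decomposable {G : Set TSeq} {s : TSeq} (hs : Decomposable G s)
    (ih : ∀ c ∈ G, ∃ D : Deriv true (s :: Γ) c, D.Guarded) : ∃ D : Deriv true Γ s, D.Guarded := by
  cases hs with
  | ax n hn => exact ⟨ax _ n hn (by simp), guarded_ax _ _⟩
  | lam n t h hs hmem =>
    obtain ⟨D, hD⟩ := ih _ hmem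
    exact ⟨_, guarded_fix (guarded_lam h hs hD) (by simp [depth])⟩
  | app n t h h0 h1 hmem0 hmem1 =>
    obtain ⟨D0, hD0⟩ := ih _ hmem0
    obtain ⟨D1, hD1⟩ := ih _ hmem1
    exact ⟨_, guarded_fix (guarded_app h h0 h1 hD0 hD1) (by simp [depth])⟩
  | del n t hocc hmem =>
    obtain ⟨D, hD⟩ := ih _ hmem
    exact ⟨_, guarded_fix (guarded_del hocc hD) (by simp [depth])⟩

theorem exists_guarded {G : Finset TSeq} (hG : ∀ s ∈ G, Decomposable G s) (Γ : List TSeq)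
    (hΓ : ∀ g ∈ Γ, g ∈ G) (s : TSeq) (hs : s ∈ G) : ∃ D : Deriv true Γ s, D.Guarded := by
  induction hm : ∑ g ∈ G, weight G g - ∑ g ∈ validSet Γ, weight G g
    using Nat.strong_induction_on generalizing Γ s with
  | _ m ih =>
    by_cases hv : s ∈ validSet Γ
    · obtain ⟨j, hj, rfl, hval⟩ := exists_validAt_of_mem_validSet hv
      exact ⟨_, guarded_assum hj hval⟩
    have hΓ' : ∀ g ∈ s :: Γ, g ∈ G := List.forall_mem_cons.2 ⟨hs, hΓ⟩
    have hbounded := Finset.sum_le_sum_of_subset (f := weight G)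
      (fun g hg => hΓ' g (validSet_subset _ g hg))
    have hgrow := sum_weight_validSet_lt_cons hΓ hv
    exact exists_guarded_of_decomposable (hG s hs) fun c hc =>
      ih _ (by omega) (s :: Γ) hΓ' c hc rfl

end Deriv

theorem stmt6_general (M : Tm) :
    (∃ D : Deriv true [] ((0 : ℕ), M), D.SC) ↔
    (∃ D : Deriv true [] ((0 : ℕ), M), D.SC0) := by
  refine ⟨fun ⟨D, hD⟩ => ?_, fun ⟨D, hD⟩ => ⟨D, D.sc_of_sc0 hD⟩⟩
  let G := D.finite_seqs.toFinset
  have hG : ∀ s ∈ G, Decomposable G s := by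
    simpa [G] using D.decomposable_of_mem_seqs hD subset_rfl (by simp)
  obtain ⟨D', hD'⟩ := Deriv.exists_guarded hG [] (by simp) _ (by simpa [G] using D.mem_seqs_self)
  exact ⟨D', hD'.sc0⟩

/-- For every infinite λ-term `M`, the empty-prefix sequent
`() M` is derivable in `Reg⁺` (closed derivation satisfying the FIX
side-condition `SC`) if and only if it is derivable in `Reg₀⁺` (closed
derivation satisfying the strengthened side-condition `SC0`). -/
theorem stmt6 (M : Tm) (hM : ClosedTm M) :
    (∃ D : Deriv true [] ((0 : ℕ), M), D.SC) ↔
    (∃ D : Deriv true [] ((0 : ℕ), M), D.SC0) :=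
  stmt6_general M
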